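/- arXiv:1908.04965 — 2 statements merged into one kernel-verified Lean document; each statement's English description precedes it below -/
import Mathlib

section
/- Let g : ℝ → SO₃ satisfy g' = a g, g(0) = I, with a(t) ∈ so₃ nonvanishing, and let ω(t) ∈ ℝ³ be the vector with a = a_ω. Set n := ω/|ω| and N(t) := g(t)⁻¹ n(t). Then g(t)N(t) = n(t) and g(t)N'(t) = n'(t) for all t (Poinsot's rolling theorem). -/
open Matrix
attribute [local instance] Matrix.linftyOpNormedAddCommGroup Matrix.linftyOpNormedSpace

/-- The matrix `a_ω` of the map `x ↦ ω × x`. -/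
def hatMap (u : Fin 3 → ℝ) : Matrix (Fin 3) (Fin 3) ℝ :=
  !![0, -u 2, u 1; u 2, 0, -u 0; -u 1, u 0, 0]

/-! Differentiating `g N = n` gives `a g N + g N' = n'`, and `a g N = ω × n` vanishes because
`n` is a multiple of `ω`. -/

theorem hatMap_mulVec (u v : Fin 3 → ℝ) : hatMap u *ᵥ v = u ⨯₃ v := by
  ext i
  fin_cases i <;> simp [hatMap, cross_apply, mulVec, dotProduct, Fin.sum_univ_three] <;> ring

theorem hatMap_mulVec_smul_self (c : ℝ) (u : Fin 3 → ℝ) : hatMap u *ᵥ (c • u) = 0 := by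
  rw [mulVec_smul, hatMap_mulVec, cross_self, smul_zero]

theorem HasDerivAt.matrix_mulVec {𝕜 : Type*} [NontriviallyNormedField 𝕜] [CompleteSpace 𝕜]
    {m n : Type*} [Fintype m] [Fintype n] {A : 𝕜 → Matrix m n 𝕜} {v : 𝕜 → n → 𝕜} {A' : Matrix m n 𝕜}
    {v' : n → 𝕜} {t : 𝕜} (hA : HasDerivAt A A' t) (hv : HasDerivAt v v' t) :
    HasDerivAt (fun s ↦ A s *ᵥ v s) (A' *ᵥ v t + A t *ᵥ v') t := by
  let B : Matrix m n 𝕜 →ₗ[𝕜] (n → 𝕜) →ₗ[𝕜] m → 𝕜 :=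
    LinearMap.mk₂ 𝕜 (· *ᵥ ·) add_mulVec smul_mulVec mulVec_add fun c A v ↦ mulVec_smul A c v
  rw [add_comm]
  exact B.toContinuousBilinearMap.hasDerivAt_of_bilinear (fun _ ↦ hA) (fun _ ↦ hv)

theorem stmt_15_general (g : ℝ → Matrix (Fin 3) (Fin 3) ℝ)
    (ω n N n' N' : ℝ → Fin 3 → ℝ)
    (horth : ∀ t, g t * (g t)ᵀ = 1)
    (hg : ∀ t, HasDerivAt g (hatMap (ω t) * g t) t)
    (hn : ∀ t, n t =
      (Real.sqrt (ω t 0 ^ 2 + ω t 1 ^ 2 + ω t 2 ^ 2))⁻¹ • ω t)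
    (hN : ∀ t, N t = ((g t)⁻¹).mulVec (n t))
    (hn' : ∀ t, HasDerivAt n (n' t) t)
    (hN' : ∀ t, HasDerivAt N (N' t) t) :
    ∀ t, (g t).mulVec (N t) = n t ∧ (g t).mulVec (N' t) = n' t := by
  have hgN : ∀ s, g s *ᵥ N s = n s := fun s ↦ by
    rw [hN s, mulVec_mulVec, inv_eq_right_inv (horth s), horth s, one_mulVec]
  intro t
  refine ⟨hgN t, ?_⟩
  have hderiv := (hg t).matrix_mulVec (hN' t)
  rw [funext hgN, ← mulVec_mulVec, hgN t, hn t, hatMap_mulVec_smul_self, zero_add] at hderiv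
  exact hderiv.unique (hn' t)

/-- Poinsot's rolling theorem: if `g : ℝ → SO₃` satisfies `g' = a_ω g`,
`g(0) = I`, with `ω` nonvanishing, `n := ω/|ω|`, `N := g⁻¹ n`, then
`g N = n` and `g N' = n'`. -/
theorem stmt_15 (g : ℝ → Matrix (Fin 3) (Fin 3) ℝ)
    (ω n N n' N' : ℝ → Fin 3 → ℝ)
    (horth : ∀ t, g t * (g t)ᵀ = 1) (hdet : ∀ t, (g t).det = 1)
    (h0 : g 0 = 1)
    (hg : ∀ t, HasDerivAt g (hatMap (ω t) * g t) t)
    (hω : ∀ t, ω t ≠ 0)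
    (hn : ∀ t, n t =
      (Real.sqrt (ω t 0 ^ 2 + ω t 1 ^ 2 + ω t 2 ^ 2))⁻¹ • ω t)
    (hN : ∀ t, N t = ((g t)⁻¹).mulVec (n t))
    (hn' : ∀ t, HasDerivAt n (n' t) t)
    (hN' : ∀ t, HasDerivAt N (N' t) t) :
    ∀ t, (g t).mulVec (N t) = n t ∧ (g t).mulVec (N' t) = n' t :=
  stmt_15_general g ω n N n' N' horth hg hn hN hn' hN'
end

section
/- Let (u(t), v(t)) be a nonvanishing solution of the linear system d/dt (u,v)ᵀ = −(1/(2ℓ))[[ẋ, ẏ],[ẏ, −ẋ]](u,v)ᵀ, where (x(t), y(t)) is a smooth plane curve and ℓ > 0. Then θ(t) := 2 arg(u(t) + i v(t)) satisfies the bicycle equation ℓ θ̇ = ẋ sin θ − ẏ cos θ. -/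
/-!
Write `u + iv = r e^{iθ/2}` with `r > 0`. Since `(u + iv) e^{-iθ/2}` is real, the derivative
of its imaginary part vanishes, which gives `r θ'/2 = v' cos (θ/2) - u' sin (θ/2)`.
Substituting the linear system, the double-angle formulas turn the right-hand side into
`(r / (2ℓ)) (x' sin θ - y' cos θ)`.
-/

open Real

lemma eq_mul_cos_and_eq_mul_sin_of_eq_mul_exp {u v r φ : ℝ}
    (h : (u : ℂ) + v * Complex.I = r * Complex.exp (φ * Complex.I)) :
    u = r * cos φ ∧ v = r * sin φ := by
  have hre := congrArg Complex.re h
  have him := congrArg Complex.im h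
  simp only [Complex.add_re, Complex.add_im, Complex.mul_re, Complex.mul_im, Complex.ofReal_re,
    Complex.ofReal_im, Complex.I_re, Complex.I_im, Complex.exp_ofReal_mul_I_re,
    Complex.exp_ofReal_mul_I_im] at hre him
  constructor <;> linarith

lemma sqrt_sq_add_sq_pos {a b : ℝ} (h : (a, b) ≠ (0, 0)) : 0 < √(a ^ 2 + b ^ 2) := by
  refine Real.sqrt_pos.mpr (lt_of_le_of_ne (by positivity) fun hab => h ?_)
  have ha : a = 0 := by nlinarith [sq_nonneg a, sq_nonneg b]
  have hb : b = 0 := by nlinarith [sq_nonneg a, sq_nonneg b]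
  rw [ha, hb]

/-- `harg` says that `(u + iv) e^{-iφ}` is real, so `φ` is an argument of `±(u + iv)`;
the identity is the vanishing derivative of the imaginary part. -/
lemma angle_deriv_mul_eq_of_forall_mul_cos_eq_mul_sin {u v φ : ℝ → ℝ} {u' v' φ' t : ℝ}
    (hu : HasDerivAt u u' t) (hv : HasDerivAt v v' t) (hφ : HasDerivAt φ φ' t)
    (harg : ∀ s, v s * cos (φ s) = u s * sin (φ s)) :
    φ' * (u t * cos (φ t) + v t * sin (φ t)) = v' * cos (φ t) - u' * sin (φ t) := by
  have hderiv := (hv.mul hφ.cos).sub (hu.mul hφ.sin)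
  have hconst : ((v * fun s => cos (φ s)) - u * fun s => sin (φ s)) = 0 := by
    funext s
    simp only [Pi.sub_apply, Pi.mul_apply, Pi.zero_apply, harg s, sub_self]
  rw [hconst] at hderiv
  have := hderiv.unique (hasDerivAt_const t 0)
  linear_combination -this

theorem stmt_19_general (ℓ : ℝ) (hℓ : 0 < ℓ)
    (x' y' u v θ θ' : ℝ → ℝ)
    (hu : ∀ t, HasDerivAt u (-(1 / (2 * ℓ)) * (x' t * u t + y' t * v t)) t)
    (hv : ∀ t, HasDerivAt v (-(1 / (2 * ℓ)) * (y' t * u t - x' t * v t)) t)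
    (hnz : ∀ t, (u t, v t) ≠ (0, 0))
    (hθ : ∀ t, HasDerivAt θ (θ' t) t)
    (harg : ∀ t, (u t : ℂ) + v t * Complex.I =
      (Real.sqrt (u t ^ 2 + v t ^ 2) : ℂ) * Complex.exp ((θ t / 2) * Complex.I)) :
    ∀ t, ℓ * θ' t = x' t * Real.sin (θ t) - y' t * Real.cos (θ t) := by
  have hpolar (s : ℝ) : u s = √(u s ^ 2 + v s ^ 2) * cos (θ s / 2) ∧
      v s = √(u s ^ 2 + v s ^ 2) * sin (θ s / 2) := by
    apply eq_mul_cos_and_eq_mul_sin_of_eq_mul_exp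
    simpa using harg s
  intro t
  have hangle := angle_deriv_mul_eq_of_forall_mul_cos_eq_mul_sin (hu t) (hv t)
    ((hθ t).div_const 2) fun s => by
      linear_combination cos (θ s / 2) * (hpolar s).2 - sin (θ s / 2) * (hpolar s).1
  have hr := sqrt_sq_add_sq_pos (hnz t)
  obtain ⟨hut, hvt⟩ := hpolar t
  set r := √(u t ^ 2 + v t ^ 2)
  rw [hut, hvt] at hangle
  rw [show θ t = 2 * (θ t / 2) by ring, sin_two_mul, cos_two_mul']
  have hpyth := sin_sq_add_cos_sq (θ t / 2)
  field_simp at hangle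
  linear_combination hangle - ℓ * θ' t * hpyth

/-- If `(u,v)` is a nonvanishing solution of the linear bicycle system, then
`θ := 2 arg(u + iv)` (a continuous choice of argument) satisfies the bicycle
equation `ℓ θ̇ = ẋ sin θ − ẏ cos θ`. -/
theorem stmt_19 (ℓ : ℝ) (hℓ : 0 < ℓ)
    (x y x' y' u v θ θ' : ℝ → ℝ)
    (hx : ∀ t, HasDerivAt x (x' t) t)
    (hy : ∀ t, HasDerivAt y (y' t) t)
    (hu : ∀ t, HasDerivAt u (-(1 / (2 * ℓ)) * (x' t * u t + y' t * v t)) t)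
    (hv : ∀ t, HasDerivAt v (-(1 / (2 * ℓ)) * (y' t * u t - x' t * v t)) t)
    (hnz : ∀ t, (u t, v t) ≠ (0, 0))
    (hθ : ∀ t, HasDerivAt θ (θ' t) t)
    (harg : ∀ t, (u t : ℂ) + v t * Complex.I =
      (Real.sqrt (u t ^ 2 + v t ^ 2) : ℂ) * Complex.exp ((θ t / 2) * Complex.I)) :
    ∀ t, ℓ * θ' t = x' t * Real.sin (θ t) - y' t * Real.cos (θ t) :=
  stmt_19_general ℓ hℓ x' y' u v θ θ' hu hv hnz hθ harg
end
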